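/- For every positive integer k, the coefficient-wise identity C_{(k,k,k,k)}(q,t) = C_{(k,k,k,m)}(q,t) holds for every positive integer m; in particular C_{(k,k,k,k)}(q,t) = C_{(k,k,k,k-1)}(q,t) for k >= 2. -/

import Mathlib

/-- Partial sum `f 1 + ⋯ + f i`. -/
def psum {n : ℕ} (f : Fin n → ℕ) (i : Fin n) : ℕ :=
  ∑ t ∈ Finset.univ.filter (fun t => t ≤ i), f t

/-- Partial sum `f 1 + ⋯ + f (i-1)`. -/
def prevSum {n : ℕ} (f : Fin n → ℕ) (i : Fin n) : ℕ :=
  ∑ t ∈ Finset.univ.filter (fun t => t < i), f t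

/-- The north-step lengths of a vector `K`, as a function on `Fin K.length`. -/
def kfun (K : List ℕ) : Fin K.length → ℕ := fun i => K.get i

/-- The `K`-Dyck paths: a path is determined by the sequence `a` of numbers of
consecutive east steps after each north step; it is valid iff all partial red
ranks `∑_{t ≤ i} (k_t - a_t)` are nonnegative and the east steps sum to `n = K.sum`. -/
def vecDyckFinset (K : List ℕ) : Finset (Fin K.length → ℕ) :=
  (Fintype.piFinset fun _ => Finset.range (K.sum + 1)).filter fun a =>
    (∀ i, psum a i ≤ psum (kfun K) i) ∧ ∑ i, a i = K.sum

/-- The area of a `K`-Dyck path: the sum of its red ranks. -/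
def vecArea (K : List ℕ) (a : Fin K.length → ℕ) : ℕ :=
  ∑ i, (psum (kfun K) i - psum a i)

/-- The height of the lowest east step of the path above the column `x`. -/
def pathHeight (K : List ℕ) (a : Fin K.length → ℕ) (x : ℕ) : ℕ :=
  ∑ i ∈ Finset.univ.filter (fun i => prevSum a i ≤ x), kfun K i

/-- The Xin–Zhang bounce algorithm, computing the column start times `s` of the
rank tableau (column `j` of the tableau has `k_j + 1` cells, filled
`s j, s j + 1, …, s j + k j` downwards).  State: step counter `i`, bounce-path
position `(x,y)`, number `cnt` of filled columns, partial `s`.  At each step,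
`v` north steps of the path are traversed, the next `v` columns are filled
starting with `i`, and the bounce path moves east by the number `h` of tableau
cells containing `i+1`. -/
def bounceLoop (K : List ℕ) (a : Fin K.length → ℕ) :
    ℕ → ℕ → ℕ → ℕ → ℕ → (Fin K.length → ℕ) → (Fin K.length → ℕ)
  | 0, _, _, _, _, s => s
  | fuel + 1, i, x, y, cnt, s =>
      if x = K.sum ∧ y = K.sum then s
      else
        let v := (Finset.univ.filter fun j : Fin K.length => prevSum a j ≤ x).card - cnt
        let s' : Fin K.length → ℕ :=
          fun j => if cnt ≤ (j : ℕ) ∧ (j : ℕ) < cnt + v then i else s j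
        let h := (Finset.univ.filter fun j : Fin K.length =>
            (j : ℕ) < cnt + v ∧ s' j ≤ i + 1 ∧ i + 1 ≤ s' j + kfun K j).card
        bounceLoop K a fuel (i + 1) (x + h) (pathHeight K a x) (cnt + v) s'

/-- The Xin–Zhang bounce statistic `∑ᵢ i·vᵢ`: the sum of the first-row entries
of the rank tableau. -/
def vecBounce (K : List ℕ) (a : Fin K.length → ℕ) : ℕ :=
  ∑ j, bounceLoop K a (K.sum + K.length + 2) 0 0 0 0 (fun _ => 0) j

open MvPolynomial in
/-- The refined q,t-Catalan number `C_K(q,t) = ∑_D q^{area D} t^{bounce D}`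
(with `q = X 0`, `t = X 1`). -/
noncomputable def vecCat (K : List ℕ) : MvPolynomial (Fin 2) ℤ :=
  ∑ a ∈ vecDyckFinset K, X 0 ^ vecArea K a * X 1 ^ vecBounce K a

section XZAux

open Finset

/-! ### Helper definitions mirroring the body of `bounceLoop` -/

def vXZ (K : List ℕ) (a : Fin K.length → ℕ) (x cnt : ℕ) : ℕ :=
  (Finset.univ.filter fun j : Fin K.length => prevSum a j ≤ x).card - cnt

def sXZ (K : List ℕ) (a : Fin K.length → ℕ) (i x cnt : ℕ) (s : Fin K.length → ℕ) :
    Fin K.length → ℕ :=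
  fun j => if cnt ≤ (j : ℕ) ∧ (j : ℕ) < cnt + vXZ K a x cnt then i else s j

def hXZ (K : List ℕ) (a : Fin K.length → ℕ) (i x cnt : ℕ) (s : Fin K.length → ℕ) : ℕ :=
  (Finset.univ.filter fun j : Fin K.length =>
    (j : ℕ) < cnt + vXZ K a x cnt ∧ sXZ K a i x cnt s j ≤ i + 1 ∧
      i + 1 ≤ sXZ K a i x cnt s j + kfun K j).card

lemma bounceLoop_succ (K : List ℕ) (a : Fin K.length → ℕ) (f i x y cnt : ℕ)
    (s : Fin K.length → ℕ) :
    bounceLoop K a (f + 1) i x y cnt s =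
      if x = K.sum ∧ y = K.sum then s
      else bounceLoop K a f (i + 1) (x + hXZ K a i x cnt s) (pathHeight K a x)
        (cnt + vXZ K a x cnt) (sXZ K a i x cnt s) := rfl

/-- Once all columns are filled, the output `s` never changes again. -/
lemma bounceLoop_stable (K : List ℕ) (a : Fin K.length → ℕ) :
    ∀ f i x y cnt s, K.length ≤ cnt → bounceLoop K a f i x y cnt s = s := by
  intro f
  induction f with
  | zero => intro i x y cnt s _; rfl
  | succ f ih =>
    intro i x y cnt s h
    rw [bounceLoop_succ]
    split
    · rfl
    · have hs : sXZ K a i x cnt s = s := by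
        funext j
        exact if_neg (fun hc => absurd (lt_of_lt_of_le j.isLt h) (not_lt.2 hc.1))
      rw [hs]
      exact ih _ _ _ _ _ (le_trans h (Nat.le_add_right _ _))

/-- Once the bounce path stalls, the output `s` never changes again. -/
lemma bounceLoop_stall (K : List ℕ) (a : Fin K.length → ℕ) :
    ∀ f i x y cnt s,
      (Finset.univ.filter fun j : Fin K.length => prevSum a j ≤ x).card ≤ cnt →
      (∀ j : Fin K.length, (j : ℕ) < cnt → s j + kfun K j ≤ i) →
      bounceLoop K a f i x y cnt s = s := by
  intro f
  induction f with
  | zero => intro i x y cnt s _ _; rfl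
  | succ f ih =>
    intro i x y cnt s hc hs
    rw [bounceLoop_succ]
    split
    · rfl
    · have hv : vXZ K a x cnt = 0 := by simp only [vXZ]; omega
      have hs' : sXZ K a i x cnt s = s := by
        funext j
        exact if_neg (by rw [hv]; omega)
      have hh : hXZ K a i x cnt s = 0 := by
        unfold hXZ
        rw [Finset.card_eq_zero, Finset.filter_eq_empty_iff]
        intro j _
        rw [hs', hv]
        rintro ⟨h1, _, h3⟩
        have := hs j (by omega)
        omega
      rw [hs', hh, hv]
      exact ih _ _ _ _ _ (by simpa using hc)
        (fun j hj => le_trans (hs j (by simpa using hj)) (Nat.le_succ _))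

/-! ### `Fin 4` expansions -/

lemma psum_eq (f : Fin 4 → ℕ) (i : Fin 4) :
    psum f i = f 0 + (if 1 ≤ (i : ℕ) then f 1 else 0) + (if 2 ≤ (i : ℕ) then f 2 else 0) +
      (if 3 ≤ (i : ℕ) then f 3 else 0) := by
  unfold psum
  rw [Finset.sum_filter, Fin.sum_univ_four]
  simp only [Fin.le_def, Fin.val_zero, Fin.val_one]
  norm_num [show ((2 : Fin 4) : ℕ) = 2 from rfl, show ((3 : Fin 4) : ℕ) = 3 from rfl]

lemma prevSum_eq (f : Fin 4 → ℕ) (i : Fin 4) :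
    prevSum f i = (if 0 < (i : ℕ) then f 0 else 0) + (if 1 < (i : ℕ) then f 1 else 0) +
      (if 2 < (i : ℕ) then f 2 else 0) := by
  unfold prevSum
  rw [Finset.sum_filter, Fin.sum_univ_four]
  simp only [Fin.lt_def, Fin.val_zero, Fin.val_one]
  rw [if_neg (by have := i.isLt; omega : ¬ ((3:Fin 4):ℕ) < (i:ℕ))]
  norm_num [show ((2 : Fin 4) : ℕ) = 2 from rfl, show ((3 : Fin 4) : ℕ) = 3 from rfl]

lemma psum0 (f : Fin 4 → ℕ) : psum f 0 = f 0 := by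
  rw [psum_eq]; norm_num [show ((0 : Fin 4) : ℕ) = 0 from rfl]

lemma psum1 (f : Fin 4 → ℕ) : psum f 1 = f 0 + f 1 := by
  rw [psum_eq]; norm_num [show ((1 : Fin 4) : ℕ) = 1 from rfl]

lemma psum2 (f : Fin 4 → ℕ) : psum f 2 = f 0 + f 1 + f 2 := by
  rw [psum_eq]; norm_num [show ((2 : Fin 4) : ℕ) = 2 from rfl]

lemma psum3 (f : Fin 4 → ℕ) : psum f 3 = f 0 + f 1 + f 2 + f 3 := by
  rw [psum_eq]; norm_num [show ((3 : Fin 4) : ℕ) = 3 from rfl]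

lemma prevSum0 (f : Fin 4 → ℕ) : prevSum f 0 = 0 := by
  rw [prevSum_eq]; norm_num [show ((0 : Fin 4) : ℕ) = 0 from rfl]

lemma prevSum3 (f : Fin 4 → ℕ) : prevSum f 3 = f 0 + f 1 + f 2 := by
  rw [prevSum_eq]; norm_num [show ((3 : Fin 4) : ℕ) = 3 from rfl]

lemma prevSum_le3 (f : Fin 4 → ℕ) (j : Fin 4) : prevSum f j ≤ prevSum f 3 := by
  rw [prevSum_eq, prevSum3]
  split_ifs <;> omega

lemma card_filter_eq (p : Fin 4 → Prop) [DecidablePred p] :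
    (Finset.univ.filter p).card = (if p 0 then 1 else 0) + (if p 1 then 1 else 0) +
      (if p 2 then 1 else 0) + (if p 3 then 1 else 0) := by
  rw [Finset.card_filter, Fin.sum_univ_four]

/-- The step lengths of `[k,k,k,c]` as a function on `Fin 4`. -/
def kf (k c : ℕ) : Fin 4 → ℕ := kfun [k, k, k, c]

lemma kf0 (k c : ℕ) : kf k c 0 = k := rfl
lemma kf1 (k c : ℕ) : kf k c 1 = k := rfl
lemma kf2 (k c : ℕ) : kf k c 2 = k := rfl
lemma kf3 (k c : ℕ) : kf k c 3 = c := rfl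

lemma sum_kkkc (k c : ℕ) : [k, k, k, c].sum = k + k + k + c := by
  simp [List.sum_cons]; omega

lemma pathHeight_kkkc (k c x : ℕ) (a : Fin 4 → ℕ) :
    pathHeight [k, k, k, c] a x =
      (if prevSum a 0 ≤ x then k else 0) + (if prevSum a 1 ≤ x then k else 0) +
      (if prevSum a 2 ≤ x then k else 0) + (if prevSum a 3 ≤ x then c else 0) := by
  show ∑ i ∈ Finset.univ.filter (fun i : Fin 4 => prevSum a i ≤ x), kf k c i = _
  rw [Finset.sum_filter, Fin.sum_univ_four, kf0, kf1, kf2, kf3]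

end XZAux
section XZCore

open Finset

variable (k m : ℕ)

/-- Core simulation lemma: starting from a common mid-loop state with at most three
filled columns, the two runs (over `[k,k,k,k]` and `[k,k,k,m]`) produce the same
start-time function, provided both fuels exceed the natural progress measure. -/
lemma loop_eq (hk : 0 < k) (hm : 0 < m) (a a' : Fin 4 → ℕ)
    (hag : ∀ j : Fin 4, (j : ℕ) < 3 → a j = a' j) :
    ∀ f f' i x y y' cnt (s : Fin 4 → ℕ),
      cnt ≤ 3 →
      (∃ x0, x0 ≤ x ∧
        cnt = (Finset.univ.filter fun j : Fin 4 => prevSum a j ≤ x0).card ∧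
        y = pathHeight [k, k, k, k] a x0 ∧ y' = pathHeight [k, k, k, m] a' x0) →
      (∀ j : Fin 4, (j : ℕ) < cnt → s j ≤ i) →
      4 - cnt + (prevSum a 3 - x) < f →
      4 - cnt + (prevSum a 3 - x) < f' →
      bounceLoop [k, k, k, k] a f i x y cnt s = bounceLoop [k, k, k, m] a' f' i x y' cnt s := by
  intro f
  induction f with
  | zero =>
    intro f' i x y y' cnt s hcnt _ _ hf _
    omega
  | succ f ih =>
    rintro f' i x y y' cnt s hcnt ⟨x0, hx0, hcard, hy, hy'⟩ hs hf hf'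
    obtain ⟨f'', rfl⟩ : ∃ f'', f' = f'' + 1 := ⟨f' - 1, by omega⟩
    have hprev : ∀ j : Fin 4, prevSum a' j = prevSum a j := by
      intro j
      rw [prevSum_eq, prevSum_eq,
        ← hag 0 (by norm_num [show ((0:Fin 4):ℕ) = 0 from rfl]),
        ← hag 1 (by norm_num [show ((1:Fin 4):ℕ) = 1 from rfl]),
        ← hag 2 (by norm_num [show ((2:Fin 4):ℕ) = 2 from rfl])]
    -- the loop cannot terminate while `cnt ≤ 3`
    have hterm1 : ¬(x = [k, k, k, k].sum ∧ y = [k, k, k, k].sum) := by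
      rintro ⟨-, hyy⟩
      have h4 : pathHeight [k, k, k, k] a x0 = [k, k, k, k].sum := by rw [← hy, hyy]
      rw [pathHeight_kkkc, sum_kkkc] at h4
      rw [card_filter_eq] at hcard
      split_ifs at h4 hcard <;> omega
    have hterm2 : ¬(x = [k, k, k, m].sum ∧ y' = [k, k, k, m].sum) := by
      rintro ⟨-, hyy⟩
      have h4 : pathHeight [k, k, k, m] a' x0 = [k, k, k, m].sum := by rw [← hy', hyy]
      rw [pathHeight_kkkc, sum_kkkc] at h4
      simp only [hprev] at h4
      rw [card_filter_eq] at hcard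
      split_ifs at h4 hcard <;> omega
    rw [bounceLoop_succ, bounceLoop_succ, if_neg hterm1, if_neg hterm2]
    have hveq : vXZ [k, k, k, m] a' x cnt = vXZ [k, k, k, k] a x cnt := by
      show (Finset.univ.filter fun j : Fin 4 => prevSum a' j ≤ x).card - cnt =
        (Finset.univ.filter fun j : Fin 4 => prevSum a j ≤ x).card - cnt
      simp only [hprev]
    have hseq : sXZ [k, k, k, m] a' i x cnt s = sXZ [k, k, k, k] a i x cnt s := by
      funext j
      show (if cnt ≤ (j : ℕ) ∧ (j : ℕ) < cnt + vXZ [k, k, k, m] a' x cnt then i else s j) =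
        sXZ [k, k, k, k] a i x cnt s j
      rw [hveq]; rfl
    have hmono : (Finset.univ.filter fun j : Fin 4 => prevSum a j ≤ x0).card ≤
        (Finset.univ.filter fun j : Fin 4 => prevSum a j ≤ x).card :=
      Finset.card_le_card (Finset.monotone_filter_right _ (fun j _ hj => le_trans hj hx0))
    have hcardle : (Finset.univ.filter fun j : Fin 4 => prevSum a j ≤ x).card ≤ 4 :=
      le_trans (Finset.card_le_univ _) (by simp)
    have hvdef : vXZ [k, k, k, k] a x cnt =
        (Finset.univ.filter fun j : Fin 4 => prevSum a j ≤ x).card - cnt := rfl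
    have hcv : cnt + vXZ [k, k, k, k] a x cnt =
        (Finset.univ.filter fun j : Fin 4 => prevSum a j ≤ x).card := by omega
    by_cases hbig : 4 ≤ cnt + vXZ [k, k, k, k] a x cnt
    · rw [hveq, hseq]
      rw [bounceLoop_stable _ _ _ _ _ _ _ _ (by simpa using hbig),
        bounceLoop_stable _ _ _ _ _ _ _ _ (by simpa using hbig)]
    · push_neg at hbig
      have hxP : x < prevSum a 3 := by
        by_contra hcon
        push_neg at hcon
        have hall : ∀ j : Fin 4, prevSum a j ≤ x := fun j => le_trans (prevSum_le3 a j) hcon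
        have : (Finset.univ.filter fun j : Fin 4 => prevSum a j ≤ x).card = 4 := by
          rw [card_filter_eq]
          simp only [hall, if_true]
        omega
      have hheq : hXZ [k, k, k, m] a' i x cnt s = hXZ [k, k, k, k] a i x cnt s := by
        show (Finset.univ.filter fun j : Fin 4 =>
            (j : ℕ) < cnt + vXZ [k, k, k, m] a' x cnt ∧
            sXZ [k, k, k, m] a' i x cnt s j ≤ i + 1 ∧
            i + 1 ≤ sXZ [k, k, k, m] a' i x cnt s j + kf k m j).card =
          (Finset.univ.filter fun j : Fin 4 =>
            (j : ℕ) < cnt + vXZ [k, k, k, k] a x cnt ∧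
            sXZ [k, k, k, k] a i x cnt s j ≤ i + 1 ∧
            i + 1 ≤ sXZ [k, k, k, k] a i x cnt s j + kf k k j).card
        rw [hveq, hseq, card_filter_eq, card_filter_eq]
        have h3lt : ¬ (((3 : Fin 4) : ℕ) < cnt + vXZ [k, k, k, k] a x cnt) := by
          rw [show ((3 : Fin 4) : ℕ) = 3 from rfl]; omega
        have hno1 : ¬ (((3 : Fin 4) : ℕ) < cnt + vXZ [k, k, k, k] a x cnt ∧
            sXZ [k, k, k, k] a i x cnt s (3 : Fin 4) ≤ i + 1 ∧
            i + 1 ≤ sXZ [k, k, k, k] a i x cnt s (3 : Fin 4) + kf k m (3 : Fin 4)) :=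
          fun hc => h3lt hc.1
        have hno2 : ¬ (((3 : Fin 4) : ℕ) < cnt + vXZ [k, k, k, k] a x cnt ∧
            sXZ [k, k, k, k] a i x cnt s (3 : Fin 4) ≤ i + 1 ∧
            i + 1 ≤ sXZ [k, k, k, k] a i x cnt s (3 : Fin 4) + kf k k (3 : Fin 4)) :=
          fun hc => h3lt hc.1
        rw [if_neg hno1, if_neg hno2]
        simp only [kf0, kf1, kf2, kf3]
        rfl
      by_cases hstall : vXZ [k, k, k, k] a x cnt = 0 ∧ hXZ [k, k, k, k] a i x cnt s = 0
      · obtain ⟨hv0, hh0⟩ := hstall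
        have hsid : sXZ [k, k, k, k] a i x cnt s = s := by
          funext j
          exact if_neg (by rw [hv0]; omega)
        have hb : ∀ j : Fin 4, (j : ℕ) < cnt → s j + kf k k j ≤ i := by
          intro j hj
          by_contra hcon
          push_neg at hcon
          have hempty : (Finset.univ.filter fun j : Fin 4 =>
              (j : ℕ) < cnt + vXZ [k, k, k, k] a x cnt ∧
              sXZ [k, k, k, k] a i x cnt s j ≤ i + 1 ∧
              i + 1 ≤ sXZ [k, k, k, k] a i x cnt s j + kf k k j).card = 0 := hh0
          rw [Finset.card_eq_zero, Finset.filter_eq_empty_iff] at hempty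
          refine hempty (Finset.mem_univ j) ⟨by omega, ?_, ?_⟩
          · rw [hsid]; exact le_trans (hs j hj) (Nat.le_succ _)
          · rw [hsid]; omega
        rw [hveq, hseq, hheq, hv0, hh0, hsid]
        simp only [Nat.add_zero]
        have hbm : ∀ j : Fin 4, (j : ℕ) < cnt → s j + kf k m j ≤ i := by
          intro j hj
          have hjk : kf k m j = kf k k j := by
            have hj3 : (j : ℕ) < 3 := by omega
            obtain ⟨jv, hjv⟩ := j
            interval_cases jv
            · exact (kf0 k m).trans (kf0 k k).symm
            · exact (kf1 k m).trans (kf1 k k).symm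
            · exact (kf2 k m).trans (kf2 k k).symm
          rw [hjk]
          exact hb j hj
        rw [bounceLoop_stall [k, k, k, k] a f (i + 1) x (pathHeight [k, k, k, k] a x) cnt s
            (by show (Finset.univ.filter fun j : Fin 4 => prevSum a j ≤ x).card ≤ cnt; omega)
            (fun j hj => le_trans (hb ⟨j.1, show j.1 < 4 from j.2⟩ hj) (Nat.le_succ _)),
          bounceLoop_stall [k, k, k, m] a' f'' (i + 1) x (pathHeight [k, k, k, m] a' x) cnt s
            (by show (Finset.univ.filter fun j : Fin 4 => prevSum a' j ≤ x).card ≤ cnt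
                simp only [hprev]
                show (Finset.univ.filter fun j : Fin 4 => prevSum a j ≤ x).card ≤ cnt
                omega)
            (fun j hj => le_trans (hbm ⟨j.1, show j.1 < 4 from j.2⟩ hj) (Nat.le_succ _))]
      · have hprog : 1 ≤ vXZ [k, k, k, k] a x cnt + hXZ [k, k, k, k] a i x cnt s := by omega
        rw [hveq, hseq, hheq]
        refine ih f'' (i + 1) (x + hXZ [k, k, k, k] a i x cnt s) _ _
          (cnt + vXZ [k, k, k, k] a x cnt) (sXZ [k, k, k, k] a i x cnt s)
          (by omega) ⟨x, Nat.le_add_right _ _, hcv, rfl, rfl⟩ ?_ (by omega) (by omega)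
        intro j hj
        show (if cnt ≤ (j : ℕ) ∧ (j : ℕ) < cnt + vXZ [k, k, k, k] a x cnt then i else s j) ≤ i + 1
        by_cases hc : (j : ℕ) < cnt
        · rw [if_neg (by omega)]
          exact le_trans (hs j hc) (Nat.le_succ _)
        · rw [if_pos ⟨by omega, hj⟩]
          omega

end XZCore
section XZGlue

open Finset

lemma bounce_eq (k m : ℕ) (hk : 0 < k) (hm : 0 < m) (a a' : Fin 4 → ℕ)
    (hag : ∀ j : Fin 4, (j : ℕ) < 3 → a j = a' j)
    (hP : prevSum a 3 ≤ k + k + k) :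
    vecBounce [k, k, k, k] a = vecBounce [k, k, k, m] a' := by
  have hprev : ∀ j : Fin 4, prevSum a' j = prevSum a j := by
    intro j
    rw [prevSum_eq, prevSum_eq,
      ← hag 0 (by norm_num [show ((0:Fin 4):ℕ) = 0 from rfl]),
      ← hag 1 (by norm_num [show ((1:Fin 4):ℕ) = 1 from rfl]),
      ← hag 2 (by norm_num [show ((2:Fin 4):ℕ) = 2 from rfl])]
  have hfn : bounceLoop [k, k, k, k] a ([k, k, k, k].sum + [k, k, k, k].length + 2) 0 0 0 0
        (fun _ => 0) =
      bounceLoop [k, k, k, m] a' ([k, k, k, m].sum + [k, k, k, m].length + 2) 0 0 0 0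
        (fun _ => 0) := by
    have e1 : [k, k, k, k].sum + [k, k, k, k].length + 2 = (k + k + k + k + 5) + 1 := by
      rw [sum_kkkc]; norm_num
    have e2 : [k, k, k, m].sum + [k, k, k, m].length + 2 = (k + k + k + m + 5) + 1 := by
      rw [sum_kkkc]; norm_num
    have h01 : ¬((0:ℕ) = [k, k, k, k].sum ∧ (0:ℕ) = [k, k, k, k].sum) := by
      rw [sum_kkkc]; omega
    have h02 : ¬((0:ℕ) = [k, k, k, m].sum ∧ (0:ℕ) = [k, k, k, m].sum) := by
      rw [sum_kkkc]; omega
    rw [e1, e2, bounceLoop_succ [k, k, k, k] a (k + k + k + k + 5) 0 0 0 0 (fun _ => 0),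
      bounceLoop_succ [k, k, k, m] a' (k + k + k + m + 5) 0 0 0 0 (fun _ => 0),
      if_neg h01, if_neg h02]
    have hveq : vXZ [k, k, k, m] a' 0 0 = vXZ [k, k, k, k] a 0 0 := by
      show (Finset.univ.filter fun j : Fin 4 => prevSum a' j ≤ 0).card - 0 =
        (Finset.univ.filter fun j : Fin 4 => prevSum a j ≤ 0).card - 0
      simp only [hprev]
    have hseq : sXZ [k, k, k, m] a' 0 0 0 (fun _ => 0) = sXZ [k, k, k, k] a 0 0 0 (fun _ => 0) := by
      funext j
      show (if 0 ≤ (j : ℕ) ∧ (j : ℕ) < 0 + vXZ [k, k, k, m] a' 0 0 then 0 else 0) =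
        sXZ [k, k, k, k] a 0 0 0 (fun _ => 0) j
      rw [hveq]; rfl
    have hvdef : vXZ [k, k, k, k] a 0 0 =
        (Finset.univ.filter fun j : Fin 4 => prevSum a j ≤ 0).card - 0 := rfl
    have hcardle : (Finset.univ.filter fun j : Fin 4 => prevSum a j ≤ 0).card ≤ 4 :=
      le_trans (Finset.card_le_univ _) (by simp)
    have hv1 : 1 ≤ (Finset.univ.filter fun j : Fin 4 => prevSum a j ≤ 0).card := by
      rw [Finset.one_le_card]
      exact ⟨0, Finset.mem_filter.2 ⟨Finset.mem_univ _, by rw [prevSum0]⟩⟩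
    by_cases hbig : 4 ≤ 0 + vXZ [k, k, k, k] a 0 0
    · rw [hveq, hseq]
      rw [bounceLoop_stable _ _ _ _ _ _ _ _ (by simpa using hbig),
        bounceLoop_stable _ _ _ _ _ _ _ _ (by simpa using hbig)]
    · push_neg at hbig
      have hheq : hXZ [k, k, k, m] a' 0 0 0 (fun _ => 0) =
          hXZ [k, k, k, k] a 0 0 0 (fun _ => 0) := by
        show (Finset.univ.filter fun j : Fin 4 =>
            (j : ℕ) < 0 + vXZ [k, k, k, m] a' 0 0 ∧
            sXZ [k, k, k, m] a' 0 0 0 (fun _ => 0) j ≤ 0 + 1 ∧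
            0 + 1 ≤ sXZ [k, k, k, m] a' 0 0 0 (fun _ => 0) j + kf k m j).card =
          (Finset.univ.filter fun j : Fin 4 =>
            (j : ℕ) < 0 + vXZ [k, k, k, k] a 0 0 ∧
            sXZ [k, k, k, k] a 0 0 0 (fun _ => 0) j ≤ 0 + 1 ∧
            0 + 1 ≤ sXZ [k, k, k, k] a 0 0 0 (fun _ => 0) j + kf k k j).card
        rw [hveq, hseq, card_filter_eq, card_filter_eq]
        have h3lt : ¬ (((3 : Fin 4) : ℕ) < 0 + vXZ [k, k, k, k] a 0 0) := by
          rw [show ((3 : Fin 4) : ℕ) = 3 from rfl]; omega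
        have hno1 : ¬ (((3 : Fin 4) : ℕ) < 0 + vXZ [k, k, k, k] a 0 0 ∧
            sXZ [k, k, k, k] a 0 0 0 (fun _ => 0) (3 : Fin 4) ≤ 0 + 1 ∧
            0 + 1 ≤ sXZ [k, k, k, k] a 0 0 0 (fun _ => 0) (3 : Fin 4) + kf k m (3 : Fin 4)) :=
          fun hc => h3lt hc.1
        have hno2 : ¬ (((3 : Fin 4) : ℕ) < 0 + vXZ [k, k, k, k] a 0 0 ∧
            sXZ [k, k, k, k] a 0 0 0 (fun _ => 0) (3 : Fin 4) ≤ 0 + 1 ∧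
            0 + 1 ≤ sXZ [k, k, k, k] a 0 0 0 (fun _ => 0) (3 : Fin 4) + kf k k (3 : Fin 4)) :=
          fun hc => h3lt hc.1
        rw [if_neg hno1, if_neg hno2]
        simp only [kf0, kf1, kf2, kf3]
        rfl
      rw [hveq, hseq, hheq]
      refine loop_eq k m hk hm a a' hag (k + k + k + k + 5) (k + k + k + m + 5) (0 + 1)
        (0 + hXZ [k, k, k, k] a 0 0 0 (fun _ => 0)) _ _ (0 + vXZ [k, k, k, k] a 0 0)
        (sXZ [k, k, k, k] a 0 0 0 (fun _ => 0)) (by omega)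
        ⟨0, Nat.zero_le _, by omega, rfl, rfl⟩ ?_ (by omega) (by omega)
      intro j hj
      show (if 0 ≤ (j : ℕ) ∧ (j : ℕ) < 0 + vXZ [k, k, k, k] a 0 0 then 0 else 0) ≤ 0 + 1
      split_ifs <;> omega
  show ∑ j : Fin 4, bounceLoop [k, k, k, k] a ([k, k, k, k].sum + [k, k, k, k].length + 2)
      0 0 0 0 (fun _ => 0) j =
    ∑ j : Fin 4, bounceLoop [k, k, k, m] a' ([k, k, k, m].sum + [k, k, k, m].length + 2)
      0 0 0 0 (fun _ => 0) j
  rw [hfn]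

end XZGlue
section XZFinal

open Finset MvPolynomial

lemma mem_dyck4 (k c : ℕ) (a : Fin 4 → ℕ) :
    a ∈ vecDyckFinset [k, k, k, c] ↔
      (∀ j : Fin 4, a j < k + k + k + c + 1) ∧
      a 0 ≤ k ∧ a 0 + a 1 ≤ k + k ∧ a 0 + a 1 + a 2 ≤ k + k + k ∧
      a 0 + a 1 + a 2 + a 3 = k + k + k + c := by
  have hS : [k, k, k, c].sum = k + k + k + c := sum_kkkc k c
  rw [vecDyckFinset, Finset.mem_filter, Fintype.mem_piFinset]
  constructor
  · rintro ⟨hpi, hle, hsum⟩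
    have hsum4 : a 0 + a 1 + a 2 + a 3 = k + k + k + c := by
      rw [← Fin.sum_univ_four a]
      exact hsum.trans hS
    have h0 : psum a 0 ≤ psum (kf k c) 0 := hle ⟨0, by norm_num⟩
    have h1 : psum a 1 ≤ psum (kf k c) 1 := hle ⟨1, by norm_num⟩
    have h2 : psum a 2 ≤ psum (kf k c) 2 := hle ⟨2, by norm_num⟩
    rw [psum0, psum0, kf0] at h0
    rw [psum1, psum1, kf0, kf1] at h1
    rw [psum2, psum2, kf0, kf1, kf2] at h2
    refine ⟨?_, h0, h1, h2, hsum4⟩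
    intro j
    have h := hpi ⟨j.1, show j.1 < [k, k, k, c].length from j.2⟩
    rw [Finset.mem_range, hS] at h
    exact h
  · rintro ⟨h1, h2, h3, h4, h5⟩
    refine ⟨?_, ?_, ?_⟩
    · intro j
      rw [Finset.mem_range, hS]
      exact h1 ⟨j.1, show j.1 < 4 from j.2⟩
    · intro i
      obtain ⟨iv, hiv⟩ := i
      have hiv4 : iv < 4 := hiv
      interval_cases iv
      · show psum a 0 ≤ psum (kf k c) 0
        rw [psum0, psum0, kf0]; exact h2
      · show psum a 1 ≤ psum (kf k c) 1
        rw [psum1, psum1, kf0, kf1]; omega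
      · show psum a 2 ≤ psum (kf k c) 2
        rw [psum2, psum2, kf0, kf1, kf2]; omega
      · show psum a 3 ≤ psum (kf k c) 3
        rw [psum3, psum3, kf0, kf1, kf2, kf3]; omega
    · show (∑ i : Fin 4, a i) = [k, k, k, c].sum
      rw [Fin.sum_univ_four, hS]; exact h5

lemma area_eq4 (k c : ℕ) (a : Fin 4 → ℕ) :
    vecArea [k, k, k, c] a =
      (k - psum a 0) + (k + k - psum a 1) + (k + k + k - psum a 2) +
        (k + k + k + c - psum a 3) := by
  show (∑ i : Fin 4, (psum (kf k c) i - psum a i)) = _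
  rw [Fin.sum_univ_four]
  rw [psum0, psum1, psum2, psum3, kf0, kf1, kf2, kf3]

/-- Change the last east-run so that the total number of east steps becomes `S`. -/
def flip3 (S : ℕ) (a : Fin 4 → ℕ) : Fin 4 → ℕ :=
  fun j => if (j : ℕ) = 3 then S - (a 0 + a 1 + a 2) else a j

lemma flip3_mem (k c d : ℕ) (a : Fin 4 → ℕ)
    (h : (∀ j : Fin 4, a j < k + k + k + c + 1) ∧
      a 0 ≤ k ∧ a 0 + a 1 ≤ k + k ∧ a 0 + a 1 + a 2 ≤ k + k + k ∧
      a 0 + a 1 + a 2 + a 3 = k + k + k + c) :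
    (∀ j : Fin 4, flip3 (k + k + k + d) a j < k + k + k + d + 1) ∧
      flip3 (k + k + k + d) a 0 ≤ k ∧
      flip3 (k + k + k + d) a 0 + flip3 (k + k + k + d) a 1 ≤ k + k ∧
      flip3 (k + k + k + d) a 0 + flip3 (k + k + k + d) a 1 + flip3 (k + k + k + d) a 2 ≤
        k + k + k ∧
      flip3 (k + k + k + d) a 0 + flip3 (k + k + k + d) a 1 + flip3 (k + k + k + d) a 2 +
        flip3 (k + k + k + d) a 3 = k + k + k + d := by
  obtain ⟨-, h2, h3, h4, h5⟩ := h
  have e0 : flip3 (k + k + k + d) a 0 = a 0 := rfl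
  have e1 : flip3 (k + k + k + d) a 1 = a 1 := rfl
  have e2 : flip3 (k + k + k + d) a 2 = a 2 := rfl
  have e3 : flip3 (k + k + k + d) a 3 = (k + k + k + d) - (a 0 + a 1 + a 2) := rfl
  refine ⟨?_, ?_, ?_, ?_, ?_⟩
  · intro j
    obtain ⟨jv, hjv⟩ := j
    have hjv4 : jv < 4 := hjv
    interval_cases jv
    · show flip3 (k + k + k + d) a 0 < k + k + k + d + 1
      rw [e0]; omega
    · show flip3 (k + k + k + d) a 1 < k + k + k + d + 1
      rw [e1]; omega
    · show flip3 (k + k + k + d) a 2 < k + k + k + d + 1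
      rw [e2]; omega
    · show flip3 (k + k + k + d) a 3 < k + k + k + d + 1
      rw [e3]; omega
  · rw [e0]; exact h2
  · rw [e0, e1]; exact h3
  · rw [e0, e1, e2]; exact h4
  · rw [e0, e1, e2, e3]; omega

lemma flip3_flip3 (k c d : ℕ) (a : Fin 4 → ℕ)
    (h4 : a 0 + a 1 + a 2 ≤ k + k + k)
    (h5 : a 0 + a 1 + a 2 + a 3 = k + k + k + c) :
    flip3 (k + k + k + c) (flip3 (k + k + k + d) a) = a := by
  funext j
  obtain ⟨jv, hjv⟩ := j
  have hjv4 : jv < 4 := hjv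
  interval_cases jv
  · show flip3 (k + k + k + c) (flip3 (k + k + k + d) a) 0 = a 0; rfl
  · show flip3 (k + k + k + c) (flip3 (k + k + k + d) a) 1 = a 1; rfl
  · show flip3 (k + k + k + c) (flip3 (k + k + k + d) a) 2 = a 2; rfl
  · show (k + k + k + c) - (flip3 (k + k + k + d) a 0 + flip3 (k + k + k + d) a 1 +
      flip3 (k + k + k + d) a 2) = a 3
    rw [show flip3 (k + k + k + d) a 0 = a 0 from rfl,
      show flip3 (k + k + k + d) a 1 = a 1 from rfl,
      show flip3 (k + k + k + d) a 2 = a 2 from rfl]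
    omega

lemma area_flip (k m : ℕ) (a : Fin 4 → ℕ)
    (h4 : a 0 + a 1 + a 2 ≤ k + k + k)
    (h5 : a 0 + a 1 + a 2 + a 3 = k + k + k + k) :
    vecArea [k, k, k, k] a = vecArea [k, k, k, m] (flip3 (k + k + k + m) a) := by
  rw [area_eq4, area_eq4]
  rw [psum0, psum1, psum2, psum3, psum0, psum1, psum2, psum3]
  rw [show flip3 (k + k + k + m) a 0 = a 0 from rfl,
    show flip3 (k + k + k + m) a 1 = a 1 from rfl,
    show flip3 (k + k + k + m) a 2 = a 2 from rfl,
    show flip3 (k + k + k + m) a 3 = (k + k + k + m) - (a 0 + a 1 + a 2) from rfl]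
  omega

lemma bounce_flip (k m : ℕ) (hk : 0 < k) (hm : 0 < m) (a : Fin 4 → ℕ)
    (h4 : a 0 + a 1 + a 2 ≤ k + k + k) :
    vecBounce [k, k, k, k] a = vecBounce [k, k, k, m] (flip3 (k + k + k + m) a) := by
  refine bounce_eq k m hk hm a _ ?_ ?_
  · intro j hj
    show a j = if (j : ℕ) = 3 then (k + k + k + m) - (a 0 + a 1 + a 2) else a j
    rw [if_neg (by omega)]
  · rw [prevSum3]; omega

lemma vecCat_eq4 (k m : ℕ) (hk : 0 < k) (hm : 0 < m) :
    vecCat [k, k, k, k] = vecCat [k, k, k, m] := by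
  unfold vecCat
  refine Finset.sum_nbij' (flip3 (k + k + k + m)) (flip3 (k + k + k + k)) ?_ ?_ ?_ ?_ ?_
  · intro a ha
    rw [mem_dyck4] at ha ⊢
    exact flip3_mem k k m a ha
  · intro b hb
    rw [mem_dyck4] at hb ⊢
    exact flip3_mem k m k b hb
  · intro a ha
    rw [mem_dyck4] at ha
    exact flip3_flip3 k k m a ha.2.2.2.1 ha.2.2.2.2
  · intro b hb
    rw [mem_dyck4] at hb
    exact flip3_flip3 k m k b hb.2.2.2.1 hb.2.2.2.2
  · intro a ha
    rw [mem_dyck4] at ha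
    rw [area_flip k m a ha.2.2.2.1 ha.2.2.2.2, bounce_flip k m hk hm a ha.2.2.2.1]

end XZFinal

/-- For every positive integer `k`, `C_{(k,k,k,k)}(q,t) = C_{(k,k,k,m)}(q,t)`
for every positive integer `m`; in particular
`C_{(k,k,k,k)}(q,t) = C_{(k,k,k,k-1)}(q,t)` for `k ≥ 2`. -/
theorem vecCat_kkkk_last_entry (k : ℕ) (hk : 0 < k) :
    (∀ m : ℕ, 0 < m → vecCat [k, k, k, k] = vecCat [k, k, k, m]) ∧
    (2 ≤ k → vecCat [k, k, k, k] = vecCat [k, k, k, k - 1]) := by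
  constructor
  · exact fun m hm => vecCat_eq4 k m hk hm
  · intro h2
    exact vecCat_eq4 k (k - 1) hk (by omega)
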